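/- Let Γ be the random bipartite graph. Then S_{r}(Γ) = {σ ∈ Sym_{l,r}(Γ) : σ preserves the parity of cross-types in every (2×1)-subgraph of Γ}. -/

import Mathlib

/-! Preamble: bipartite graphs, the random bipartite graph, side-preserving
permutation groups, switches, switch groups, and related notions. -/

/-- A bipartite graph on a vertex type `V`: the sides `left` and `right`
partition `V`, both sides are nonempty, and `adj` (the relation `P₁`) only holds
from `left` to `right`.  The relation `P₂` is the complement of `adj` on
`left × right`. -/
structure BipartiteGraph (V : Type*) where
  left : Set V
  right : Set V
  adj : V → V → Prop
  left_nonempty : left.Nonempty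
  right_nonempty : right.Nonempty
  union_eq : left ∪ right = Set.univ
  disjoint_sides : Disjoint left right
  adj_dom : ∀ a b, adj a b → a ∈ left ∧ b ∈ right

/-- The two sides of a bipartite graph. -/
inductive BSide : Type
  | l : BSide
  | r : BSide
deriving DecidableEq

namespace BipartiteGraph

variable {V : Type*} (Γ : BipartiteGraph V)

/-- The side of the graph indexed by an element of `BSide`. -/
def side : BSide → Set V
  | BSide.l => Γ.left
  | BSide.r => Γ.right

/-- `Γ` is (isomorphic to) the random bipartite graph: it is countable, both
sides are infinite, and it satisfies the extension properties `Θₙ` for all `n`. -/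
structure IsRandom : Prop where
  countable : Countable V
  left_infinite : Γ.left.Infinite
  right_infinite : Γ.right.Infinite
  ext_left : ∀ X₁ X₂ : Finset V, ↑X₁ ⊆ Γ.left → ↑X₂ ⊆ Γ.left → Disjoint X₁ X₂ →
      ∃ v ∈ Γ.right, (∀ x ∈ X₁, Γ.adj x v) ∧ (∀ x ∈ X₂, ¬ Γ.adj x v)
  ext_right : ∀ X₁ X₂ : Finset V, ↑X₁ ⊆ Γ.right → ↑X₂ ⊆ Γ.right → Disjoint X₁ X₂ →
      ∃ v ∈ Γ.left, (∀ x ∈ X₁, Γ.adj v x) ∧ (∀ x ∈ X₂, ¬ Γ.adj v x)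

/-- `Sym_{l,r}(Γ)`: the group of permutations of `V` preserving both sides. -/
def symLR : Subgroup (Equiv.Perm V) where
  carrier := {g | (∀ v, g v ∈ Γ.left ↔ v ∈ Γ.left) ∧ (∀ v, g v ∈ Γ.right ↔ v ∈ Γ.right)}
  one_mem' := ⟨fun _ => Iff.rfl, fun _ => Iff.rfl⟩
  mul_mem' := by
    rintro a b ⟨hal, har⟩ ⟨hbl, hbr⟩
    exact ⟨fun v => (hal (b v)).trans (hbl v), fun v => (har (b v)).trans (hbr v)⟩
  inv_mem' := by
    rintro a ⟨hal, har⟩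
    refine ⟨fun v => ?_, fun v => ?_⟩
    · have h := hal (a⁻¹ v); rw [Equiv.Perm.inv_def, Equiv.apply_symm_apply] at h; exact h.symm
    · have h := har (a⁻¹ v); rw [Equiv.Perm.inv_def, Equiv.apply_symm_apply] at h; exact h.symm

/-- The automorphism group of `Γ`: side-preserving permutations preserving `adj`
(and hence both cross-types). -/
def autGroup : Subgroup (Equiv.Perm V) where
  carrier := {g | g ∈ Γ.symLR ∧ ∀ a b, Γ.adj a b ↔ Γ.adj (g a) (g b)}
  one_mem' := ⟨Γ.symLR.one_mem, fun _ _ => Iff.rfl⟩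
  mul_mem' := by
    rintro a b ⟨ha, ha2⟩ ⟨hb, hb2⟩
    exact ⟨mul_mem ha hb, fun x y => (hb2 x y).trans (ha2 (b x) (b y))⟩
  inv_mem' := by
    rintro a ⟨ha, ha2⟩
    refine ⟨inv_mem ha, fun x y => ?_⟩
    have h := ha2 (a⁻¹ x) (a⁻¹ y)
    rw [Equiv.Perm.inv_def, Equiv.apply_symm_apply, Equiv.apply_symm_apply] at h
    exact h.symm

/-- A permutation `g` is a switch with respect to a set `A` if it preserves the
sides and, for every cross-edge `(a, b)`, the cross-type of `(a, b)` is preserved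
if and only if `|{a, b} ∩ A| ≠ 1`. -/
def IsSwitch (g : Equiv.Perm V) (A : Set V) : Prop :=
  g ∈ Γ.symLR ∧ ∀ a ∈ Γ.left, ∀ b ∈ Γ.right,
    ((Γ.adj a b ↔ Γ.adj (g a) (g b)) ↔ ({a, b} ∩ A : Set V).ncard ≠ 1)

/-- The restriction of a map `g` to a set `S` is a switch with respect to `A`:
the condition of `IsSwitch` holds for all cross-edges inside `S`. -/
def IsSwitchOn (g : V → V) (S : Set V) (A : Set V) : Prop :=
  ∀ a ∈ S ∩ Γ.left, ∀ b ∈ S ∩ Γ.right,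
    ((Γ.adj a b ↔ Γ.adj (g a) (g b)) ↔ ({a, b} ∩ A : Set V).ncard ≠ 1)

/-- The restriction of a map `g` to a set `S` is an isomorphism: `g` preserves
the cross-type of every cross-edge inside `S`. -/
def IsIsoOn (g : V → V) (S : Set V) : Prop :=
  ∀ a ∈ S ∩ Γ.left, ∀ b ∈ S ∩ Γ.right, (Γ.adj a b ↔ Γ.adj (g a) (g b))

end BipartiteGraph

/-- A subgroup of the full symmetric group is closed (in the topology of
pointwise convergence) iff it contains every permutation which agrees with some
member of the subgroup on each finite subset. -/
def IsClosedSubgroup {V : Type*} (G : Subgroup (Equiv.Perm V)) : Prop :=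
  ∀ g : Equiv.Perm V, (∀ F : Finset V, ∃ h ∈ G, ∀ x ∈ F, h x = g x) → g ∈ G

/-- The closed subgroup generated by a set of permutations: the intersection of
all closed subgroups containing the set. -/
def closedClosure {V : Type*} (S : Set (Equiv.Perm V)) : Subgroup (Equiv.Perm V) :=
  sInf {G : Subgroup (Equiv.Perm V) | IsClosedSubgroup G ∧ S ⊆ ↑G}

namespace BipartiteGraph

variable {V : Type*} (Γ : BipartiteGraph V)

/-- The switch group `S_X(Γ)`: the closed subgroup of `Sym_{l,r}(Γ)` generated
by `Aut(Γ)` together with all switches with respect to a single vertex `v ∈ R_i`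
for `i ∈ X`. -/
def switchGroup (X : Set BSide) : Subgroup (Equiv.Perm V) :=
  closedClosure ((Γ.autGroup : Set (Equiv.Perm V)) ∪
    {g | ∃ i ∈ X, ∃ v ∈ Γ.side i, Γ.IsSwitch g {v}})

/-- The group `S_X(Γ)* `: the closed subgroup generated by `S_X(Γ)` together with
a switch `ρ` with respect to the whole side `R_l`. -/
def switchGroupStar (X : Set BSide) : Subgroup (Equiv.Perm V) :=
  closedClosure ((Γ.switchGroup X : Set (Equiv.Perm V)) ∪ {g | Γ.IsSwitch g Γ.left})

/-- Membership in `Aut(Γ)*`, the group of side-preserving permutations which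
either preserve all cross-types on `R_l × R_r` or exchange all cross-types on
`R_l × R_r`. -/
def InAutStar (g : Equiv.Perm V) : Prop :=
  g ∈ Γ.symLR ∧
    ((∀ a ∈ Γ.left, ∀ b ∈ Γ.right, (Γ.adj a b ↔ Γ.adj (g a) (g b))) ∨
     (∀ a ∈ Γ.left, ∀ b ∈ Γ.right, (Γ.adj a b ↔ ¬ Γ.adj (g a) (g b))))

/-- The number of cross-edges of cross-type `P₁` inside the set `S`. -/
noncomputable def edgeCount (S : Set V) : ℕ :=
  {p : V × V | p.1 ∈ S ∧ p.2 ∈ S ∧ Γ.adj p.1 p.2}.ncard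

/-- `g` preserves the parity of cross-types on `S`: the number of `P₁`
cross-edges in `S` is even iff the number of `P₁` cross-edges in `g[S]` is even. -/
def PreservesParityOn (g : V → V) (S : Set V) : Prop :=
  Even (Γ.edgeCount S) ↔ Even (Γ.edgeCount (g '' S))

/-- An `(m × n)`-subgraph of `Γ`: a finite set of vertices with `m` vertices on
the left side and `n` vertices on the right side. -/
def IsMNSubgraph (S : Set V) (m n : ℕ) : Prop :=
  S.Finite ∧ (S ∩ Γ.left).ncard = m ∧ (S ∩ Γ.right).ncard = n

end BipartiteGraph

/-!
A side-preserving permutation preserves the parity of every `(2 × 1)`-subgraph `{a₁, a₂, b}`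
exactly when, for each right vertex `b`, it either keeps or exchanges all cross-types at `b`,
i.e. when it is a switch with respect to some set `A` of right vertices. These permutations form a
closed subgroup containing `Aut(Γ)` and the switches at single right vertices, which gives one
inclusion. Conversely, let `σ` be a switch with respect to `A` and `F` finite. Exchanging the
cross-types at finitely many right vertices of `Γ` yields a random bipartite graph again, so back
and forth provides switches at single right vertices; composing them gives `τ ∈ S_{r}(Γ)` with the
same cross-types as `σ` on `F`. Back and forth once more yields `α ∈ Aut(Γ)` with `α τ = σ` on `F`,
so `σ` lies in the closed subgroup `S_{r}(Γ)`.
-/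

namespace BipartiteGraph

section Basic

variable {V : Type*} (Γ : BipartiteGraph V)

lemma mem_right_iff_notMem_left {v : V} : v ∈ Γ.right ↔ v ∉ Γ.left := by
  refine ⟨fun hr hl => Set.disjoint_left.1 Γ.disjoint_sides hl hr, fun hl => ?_⟩
  have hv : v ∈ Γ.left ∪ Γ.right := Γ.union_eq ▸ Set.mem_univ v
  exact hv.resolve_left hl

lemma not_adj_of_mem_left {a b : V} (hb : b ∈ Γ.left) : ¬Γ.adj a b := fun h =>
  Γ.mem_right_iff_notMem_left.1 (Γ.adj_dom a b h).2 hb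

lemma mem_symLR_of_forall_mem_left {g : Equiv.Perm V} (hg : ∀ v, g v ∈ Γ.left ↔ v ∈ Γ.left) :
    g ∈ Γ.symLR :=
  ⟨hg, fun v => by simp only [mem_right_iff_notMem_left, hg]⟩

def transpose : BipartiteGraph V where
  left := Γ.right
  right := Γ.left
  adj a b := Γ.adj b a
  left_nonempty := Γ.right_nonempty
  right_nonempty := Γ.left_nonempty
  union_eq := Set.union_comm Γ.left Γ.right ▸ Γ.union_eq
  disjoint_sides := Γ.disjoint_sides.symm
  adj_dom a b h := (Γ.adj_dom b a h).symm

variable {Γ}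

lemma IsRandom.transpose (hΓ : Γ.IsRandom) : Γ.transpose.IsRandom where
  countable := hΓ.countable
  left_infinite := hΓ.right_infinite
  right_infinite := hΓ.left_infinite
  ext_left := hΓ.ext_right
  ext_right := hΓ.ext_left

lemma IsRandom.exists_left_forall_adj_iff (hΓ : Γ.IsRandom) (A R : Finset V) (P : V → Prop)
    (hR : ↑R ⊆ Γ.right) : ∃ v ∈ Γ.left, v ∉ A ∧ ∀ x ∈ R, Γ.adj v x ↔ P x := by
  classical
  induction A using Finset.induction_on generalizing R P with
  | empty =>
    obtain ⟨v, hv, h₁, h₂⟩ := hΓ.ext_right (R.filter P) (R.filter (¬P ·))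
      (fun x hx => hR (Finset.mem_filter.1 hx).1) (fun x hx => hR (Finset.mem_filter.1 hx).1)
      (Finset.disjoint_filter_filter_not R R P)
    refine ⟨v, hv, Finset.notMem_empty v, fun x hx => ⟨fun h => ?_, fun h => ?_⟩⟩
    · by_contra hP
      exact h₂ x (Finset.mem_filter.2 ⟨hx, hP⟩) h
    · exact h₁ x (Finset.mem_filter.2 ⟨hx, h⟩)
  | insert w A _ ih =>
    -- a fresh right vertex `x₀` on which `v` is made to disagree with `w`
    obtain ⟨x₀, hx₀, hx₀R⟩ := hΓ.right_infinite.exists_notMem_finset R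
    obtain ⟨v, hv, hvA, hvP⟩ := ih (insert x₀ R) (Function.update P x₀ (¬Γ.adj w x₀))
      (by simpa [Set.insert_subset_iff] using ⟨hx₀, hR⟩)
    refine ⟨v, hv, ?_, fun x hx => ?_⟩
    · rw [Finset.mem_insert, not_or]
      refine ⟨?_, hvA⟩
      rintro rfl
      simpa using hvP x₀ (Finset.mem_insert_self x₀ R)
    · rw [hvP x (Finset.mem_insert_of_mem hx), Function.update_of_ne (by rintro rfl; exact hx₀R hx)]

lemma IsRandom.exists_right_forall_adj_iff (hΓ : Γ.IsRandom) (A R : Finset V) (P : V → Prop)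
    (hR : ↑R ⊆ Γ.left) : ∃ v ∈ Γ.right, v ∉ A ∧ ∀ x ∈ R, Γ.adj x v ↔ P x :=
  hΓ.transpose.exists_left_forall_adj_iff A R P hR

def twist (Γ : BipartiteGraph V) (B : Set V) : BipartiteGraph V where
  left := Γ.left
  right := Γ.right
  adj a b := a ∈ Γ.left ∧ b ∈ Γ.right ∧ ¬(Γ.adj a b ↔ b ∈ B)
  left_nonempty := Γ.left_nonempty
  right_nonempty := Γ.right_nonempty
  union_eq := Γ.union_eq
  disjoint_sides := Γ.disjoint_sides
  adj_dom _ _ h := ⟨h.1, h.2.1⟩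

lemma twist_adj {B : Set V} {a b : V} (ha : a ∈ Γ.left) (hb : b ∈ Γ.right) :
    (Γ.twist B).adj a b ↔ ¬(Γ.adj a b ↔ b ∈ B) := by
  simp [twist, ha, hb]

lemma IsRandom.twist (hΓ : Γ.IsRandom) (B : Finset V) : (Γ.twist ↑B).IsRandom where
  countable := hΓ.countable
  left_infinite := hΓ.left_infinite
  right_infinite := hΓ.right_infinite
  ext_left X₁ X₂ h₁ h₂ hX := by
    classical
    -- a witness outside `B` sees the same cross-types in `Γ` and in the twist
    obtain ⟨v, hv, hvB, hvX⟩ := hΓ.exists_right_forall_adj_iff B (X₁ ∪ X₂) (· ∈ X₁)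
      (by rw [Finset.coe_union]; exact Set.union_subset h₁ h₂)
    refine ⟨v, hv, fun x hx => ?_, fun x hx => ?_⟩ <;>
      rw [twist_adj (by first | exact h₁ hx | exact h₂ hx) hv,
        hvX x (by simp [hx])]
    · simpa [hvB] using hx
    · simpa [hvB] using Finset.disjoint_right.1 hX hx
  ext_right X₁ X₂ h₁ h₂ hX := by
    classical
    obtain ⟨v, hv, -, hvX⟩ := hΓ.exists_left_forall_adj_iff ∅ (X₁ ∪ X₂) (fun x => ¬(x ∈ X₁ ↔ x ∈ B))
      (by rw [Finset.coe_union]; exact Set.union_subset h₁ h₂)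
    refine ⟨v, hv, fun x hx => ?_, fun x hx => ?_⟩ <;>
      rw [twist_adj hv (by first | exact h₁ hx | exact h₂ hx), hvX x (by simp [hx])]
    · simp [hx]
    · simp [Finset.disjoint_right.1 hX hx]

end Basic

section BackAndForth

variable {V W : Type*}

/-- `s` is read as the partial map sending `x` to `y` for `(x, y) ∈ s`. -/
def IsPartialIso (Γ₁ : BipartiteGraph V) (Γ₂ : BipartiteGraph W) (s : Set (V × W)) : Prop :=
  ∀ p ∈ s, ∀ q ∈ s,
    (p.1 = q.1 ↔ p.2 = q.2) ∧ (p.1 ∈ Γ₁.left ↔ p.2 ∈ Γ₂.left) ∧ (Γ₁.adj p.1 q.1 ↔ Γ₂.adj p.2 q.2)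

def IsIso (Γ₁ : BipartiteGraph V) (Γ₂ : BipartiteGraph W) (e : V ≃ W) : Prop :=
  (∀ v, e v ∈ Γ₂.left ↔ v ∈ Γ₁.left) ∧ ∀ a b, Γ₁.adj a b ↔ Γ₂.adj (e a) (e b)

variable {Γ₁ : BipartiteGraph V} {Γ₂ : BipartiteGraph W}

namespace IsPartialIso

variable {s : Set (V × W)}

lemma fst_mem_right_iff (h : IsPartialIso Γ₁ Γ₂ s) {p : V × W} (hp : p ∈ s) :
    p.1 ∈ Γ₁.right ↔ p.2 ∈ Γ₂.right := by
  rw [mem_right_iff_notMem_left, mem_right_iff_notMem_left, (h p hp p hp).2.1]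

lemma transpose (h : IsPartialIso Γ₁ Γ₂ s) : IsPartialIso Γ₁.transpose Γ₂.transpose s :=
  fun p hp q hq => ⟨(h p hp q hq).1, h.fst_mem_right_iff hp, (h q hq p hp).2.2⟩

lemma image_swap (h : IsPartialIso Γ₁ Γ₂ s) : IsPartialIso Γ₂ Γ₁ (Prod.swap '' s) := by
  simp only [IsPartialIso, Set.forall_mem_image]
  intro p hp q hq
  obtain ⟨heq, hleft, hadj⟩ := h p hp q hq
  exact ⟨heq.symm, hleft.symm, hadj.symm⟩

lemma exists_insert_of_mem_left (h₂ : Γ₂.IsRandom) (hs : s.Finite) (h : IsPartialIso Γ₁ Γ₂ s)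
    {a : V} (ha : a ∈ Γ₁.left) (hdom : ∀ p ∈ s, p.1 ≠ a) :
    ∃ b, IsPartialIso Γ₁ Γ₂ (insert (a, b) s) := by
  classical
  set t := hs.toFinset
  have ht : ∀ {p}, p ∈ t ↔ p ∈ s := hs.mem_toFinset
  obtain ⟨b, hb, hbt, hbR⟩ := h₂.exists_left_forall_adj_iff (t.image Prod.snd)
    ((t.filter (·.1 ∈ Γ₁.right)).image Prod.snd) (fun y => ∃ p ∈ s, p.2 = y ∧ Γ₁.adj a p.1)
    (by
      simp only [Finset.coe_image, Finset.coe_filter, Set.image_subset_iff]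
      exact fun p ⟨hp, hpr⟩ => (h.fst_mem_right_iff (ht.1 hp)).1 hpr)
  have hran : ∀ p ∈ s, p.2 ≠ b := fun p hp hpb => hbt (Finset.mem_image.2 ⟨p, ht.2 hp, hpb⟩)
  have hadj : ∀ p ∈ s, Γ₁.adj a p.1 ↔ Γ₂.adj b p.2 := by
    intro p hp
    by_cases hpr : p.1 ∈ Γ₁.right
    · rw [hbR p.2 (Finset.mem_image.2 ⟨p, Finset.mem_filter.2 ⟨ht.2 hp, hpr⟩, rfl⟩)]
      refine ⟨fun hap => ⟨p, hp, rfl, hap⟩, ?_⟩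
      rintro ⟨q, hq, hqp, haq⟩
      rwa [← (h q hq p hp).1.2 hqp]
    · have hpl : p.1 ∈ Γ₁.left := by simpa [mem_right_iff_notMem_left] using hpr
      exact iff_of_false (Γ₁.not_adj_of_mem_left hpl)
        (Γ₂.not_adj_of_mem_left ((h p hp p hp).2.1.1 hpl))
  refine ⟨b, ?_⟩
  rintro p (rfl | hp) q (rfl | hq)
  · exact ⟨by simp, by simp [ha, hb], iff_of_false (Γ₁.not_adj_of_mem_left ha)
      (Γ₂.not_adj_of_mem_left hb)⟩
  · exact ⟨iff_of_false (hdom q hq).symm (hran q hq).symm, by simp [ha, hb], hadj q hq⟩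
  · exact ⟨iff_of_false (hdom p hp) (hran p hp), (h p hp p hp).2.1,
      iff_of_false (Γ₁.not_adj_of_mem_left ha) (Γ₂.not_adj_of_mem_left hb)⟩
  · exact h p hp q hq

lemma exists_insert_fst (h₂ : Γ₂.IsRandom) (hs : s.Finite) (h : IsPartialIso Γ₁ Γ₂ s) (a : V) :
    ∃ b, IsPartialIso Γ₁ Γ₂ (insert (a, b) s) := by
  by_cases hdom : ∃ p ∈ s, p.1 = a
  · obtain ⟨⟨a, b⟩, hp, rfl⟩ := hdom
    exact ⟨b, by rwa [Set.insert_eq_of_mem hp]⟩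
  push Not at hdom
  by_cases ha : a ∈ Γ₁.left
  · exact h.exists_insert_of_mem_left h₂ hs ha hdom
  · obtain ⟨b, hb⟩ := h.transpose.exists_insert_of_mem_left h₂.transpose hs
      (show a ∈ Γ₁.right from Γ₁.mem_right_iff_notMem_left.2 ha) hdom
    exact ⟨b, hb.transpose⟩

lemma exists_insert_snd (h₁ : Γ₁.IsRandom) (hs : s.Finite) (h : IsPartialIso Γ₁ Γ₂ s) (b : W) :
    ∃ a, IsPartialIso Γ₁ Γ₂ (insert (a, b) s) := by
  obtain ⟨a, ha⟩ := h.image_swap.exists_insert_fst h₁ (hs.image _) b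
  refine ⟨a, ?_⟩
  simpa only [Set.image_insert_eq, Set.image_image, Prod.swap_prod_mk, Prod.swap_swap,
    Set.image_id'] using ha.image_swap

end IsPartialIso

variable (Γ₁ Γ₂) in
abbrev FinPartialIso : Type _ :=
  {t : Finset (V × W) // IsPartialIso Γ₁ Γ₂ ↑t}

def definedAtFst (h₂ : Γ₂.IsRandom) (a : V) : Order.Cofinal (FinPartialIso Γ₁ Γ₂) where
  carrier := {t | ∃ b, (a, b) ∈ t.1}
  isCofinal t := by
    classical
    obtain ⟨b, hb⟩ := t.2.exists_insert_fst h₂ t.1.finite_toSet a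
    exact ⟨⟨insert (a, b) t.1, by simpa using hb⟩, ⟨b, Finset.mem_insert_self _ _⟩,
      Finset.subset_insert _ _⟩

def definedAtSnd (h₁ : Γ₁.IsRandom) (b : W) : Order.Cofinal (FinPartialIso Γ₁ Γ₂) where
  carrier := {t | ∃ a, (a, b) ∈ t.1}
  isCofinal t := by
    classical
    obtain ⟨a, ha⟩ := t.2.exists_insert_snd h₁ t.1.finite_toSet b
    exact ⟨⟨insert (a, b) t.1, by simpa using ha⟩, ⟨a, Finset.mem_insert_self _ _⟩,
      Finset.subset_insert _ _⟩

theorem IsPartialIso.exists_isIso (h₁ : Γ₁.IsRandom) (h₂ : Γ₂.IsRandom) {s : Set (V × W)}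
    (hs : s.Finite) (h : IsPartialIso Γ₁ Γ₂ s) :
    ∃ e : V ≃ W, IsIso Γ₁ Γ₂ e ∧ ∀ p ∈ s, e p.1 = p.2 := by
  have := h₁.countable
  have := h₂.countable
  cases nonempty_encodable V
  cases nonempty_encodable W
  let t₀ : FinPartialIso Γ₁ Γ₂ := ⟨hs.toFinset, by simpa using h⟩
  let 𝒟 := Sum.elim (definedAtFst (Γ₁ := Γ₁) h₂) (definedAtSnd h₁)
  -- a directed family of finite partial isomorphisms meeting every `𝒟 i` (Rasiowa–Sikorski)
  let I := Order.idealOfCofinals t₀ 𝒟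
  have hI : ∀ t ∈ I, ∀ t' ∈ I, IsPartialIso Γ₁ Γ₂ ((t.1 : Set (V × W)) ∪ t'.1) := by
    intro t ht t' ht'
    obtain ⟨m, -, htm, ht'm⟩ := I.directed _ ht _ ht'
    exact fun p hp q hq => m.2 p (Set.union_subset htm ht'm hp) q (Set.union_subset htm ht'm hq)
  choose tf htf htfI using fun a => Order.cofinal_meets_idealOfCofinals t₀ 𝒟 (.inl a)
  choose tg htg htgI using fun b => Order.cofinal_meets_idealOfCofinals t₀ 𝒟 (.inr b)
  choose f hf using htf
  choose g hg using htg
  refine ⟨⟨f, g, fun a => ?_, fun b => ?_⟩, ⟨fun a => ?_, fun a a' => ?_⟩, fun p hp => ?_⟩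
  · exact ((hI _ (htfI a) _ (htgI (f a)) _ (Or.inl (hf _)) _ (Or.inr (hg _))).1.2 rfl).symm
  · exact (hI _ (htfI (g b)) _ (htgI b) _ (Or.inl (hf _)) _ (Or.inr (hg _))).1.1 rfl
  · exact (hI _ (htfI a) _ (htfI a) _ (Or.inl (hf a)) _ (Or.inl (hf a))).2.1.symm
  · exact (hI _ (htfI a) _ (htfI a') _ (Or.inl (hf a)) _ (Or.inr (hf a'))).2.2
  · exact ((hI _ (Order.mem_idealOfCofinals t₀ 𝒟) _ (htfI p.1) p
      (Or.inl (by simpa [t₀] using hp)) _ (Or.inr (hf p.1))).1.1 rfl).symm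

end BackAndForth

section Switches

variable {V : Type*} {Γ : BipartiteGraph V} {g h σ : Equiv.Perm V} {A C : Set V}

lemma IsIso.mem_autGroup (he : IsIso Γ Γ g) : g ∈ Γ.autGroup :=
  ⟨Γ.mem_symLR_of_forall_mem_left he.1, he.2⟩

lemma IsRandom.exists_mem_autGroup_apply_eq (hΓ : Γ.IsRandom) (F : Finset V) (hg : g ∈ Γ.symLR)
    (hh : h ∈ Γ.symLR) (hF : ∀ a ∈ F, ∀ b ∈ F, Γ.adj (g a) (g b) ↔ Γ.adj (h a) (h b)) :
    ∃ α ∈ Γ.autGroup, ∀ x ∈ F, α (g x) = h x := by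
  obtain ⟨α, hα, hαgh⟩ := IsPartialIso.exists_isIso hΓ hΓ
    (F.finite_toSet.image fun x => (g x, h x)) <| by
      simp only [IsPartialIso, Set.forall_mem_image]
      intro x _ y _
      exact ⟨by simp, by rw [hg.1, hh.1], hF x ‹_› y ‹_›⟩
  exact ⟨α, hα.mem_autGroup, fun x hx => hαgh _ ⟨x, hx, rfl⟩⟩

lemma ncard_pair_inter_ne_one_iff {a b : V} (ha : a ∉ A) :
    ({a, b} ∩ A : Set V).ncard ≠ 1 ↔ b ∉ A := by
  rw [Set.insert_inter_of_notMem ha]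
  by_cases hb : b ∈ A
  · simp [Set.singleton_inter_of_mem hb, hb]
  · simp [Set.singleton_inter_of_notMem hb, hb]

lemma isSwitch_iff_of_subset_right (hA : A ⊆ Γ.right) :
    Γ.IsSwitch g A ↔
      g ∈ Γ.symLR ∧ ∀ a ∈ Γ.left, ∀ b ∈ Γ.right, ((Γ.adj a b ↔ Γ.adj (g a) (g b)) ↔ b ∉ A) :=
  and_congr_right fun _ => forall₂_congr fun _ ha => forall₂_congr fun _ _ => by
    rw [ncard_pair_inter_ne_one_iff fun h => Γ.mem_right_iff_notMem_left.1 (hA h) ha]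

lemma isSwitch_empty_of_mem_autGroup (hg : g ∈ Γ.autGroup) : Γ.IsSwitch g ∅ :=
  (isSwitch_iff_of_subset_right (Set.empty_subset _)).2
    ⟨hg.1, fun a _ b _ => by simp [← hg.2 a b]⟩

lemma IsSwitch.mul (hA : A ⊆ Γ.right) (hC : C ⊆ Γ.right) (hg : Γ.IsSwitch g A)
    (hh : Γ.IsSwitch h C) : Γ.IsSwitch (h * g) (symmDiff A (g ⁻¹' C)) := by
  rw [isSwitch_iff_of_subset_right hA] at hg
  rw [isSwitch_iff_of_subset_right hC] at hh
  refine (isSwitch_iff_of_subset_right ?_).2 ⟨mul_mem hh.1 hg.1, fun a ha b hb => ?_⟩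
  · exact Set.symmDiff_subset_union.trans (Set.union_subset hA fun b hb => (hg.1.2 b).1 (hC hb))
  have hga := hg.2 a ha b hb
  have hhga := hh.2 (g a) ((hg.1.1 a).2 ha) (g b) ((hg.1.2 b).2 hb)
  simp only [Equiv.Perm.coe_mul, Function.comp_apply, Set.mem_symmDiff, Set.mem_preimage]
  tauto

lemma IsSwitch.adj_apply_iff (hA : A ⊆ Γ.right) (hC : C ⊆ Γ.right) (hg : Γ.IsSwitch g A)
    (hh : Γ.IsSwitch h C) {a b : V} (hb : b ∈ A ↔ b ∈ C) :
    Γ.adj (g a) (g b) ↔ Γ.adj (h a) (h b) := by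
  rw [isSwitch_iff_of_subset_right hA] at hg
  rw [isSwitch_iff_of_subset_right hC] at hh
  by_cases hab : a ∈ Γ.left ∧ b ∈ Γ.right
  · have hga := hg.2 a hab.1 b hab.2
    have hha := hh.2 a hab.1 b hab.2
    tauto
  · refine iff_of_false (fun hadj => hab ?_) (fun hadj => hab ?_)
    · exact ⟨(hg.1.1 a).1 (Γ.adj_dom _ _ hadj).1, (hg.1.2 b).1 (Γ.adj_dom _ _ hadj).2⟩
    · exact ⟨(hh.1.1 a).1 (Γ.adj_dom _ _ hadj).1, (hh.1.2 b).1 (Γ.adj_dom _ _ hadj).2⟩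

lemma IsRandom.exists_isSwitch (hΓ : Γ.IsRandom) (B : Finset V) (hB : ↑B ⊆ Γ.right) :
    ∃ g, Γ.IsSwitch g B := by
  -- an isomorphism from `Γ.twist B` onto `Γ` is such a switch
  obtain ⟨e, he, -⟩ := IsPartialIso.exists_isIso (hΓ.twist B) hΓ Set.finite_empty
    (fun _ hp => hp.elim)
  refine ⟨e, (isSwitch_iff_of_subset_right hB).2
    ⟨Γ.mem_symLR_of_forall_mem_left he.1, fun a ha b hb => ?_⟩⟩
  have hab := he.2 a b
  rw [twist_adj ha hb] at hab
  tauto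

lemma IsRandom.exists_isSwitch_mem (hΓ : Γ.IsRandom) {G : Subgroup (Equiv.Perm V)}
    (hG : ∀ g, ∀ v ∈ Γ.right, Γ.IsSwitch g {v} → g ∈ G) (B : Finset V) (hB : ↑B ⊆ Γ.right) :
    ∃ τ ∈ G, Γ.IsSwitch τ B := by
  classical
  induction B using Finset.induction_on with
  | empty => exact ⟨1, one_mem G, by simpa using isSwitch_empty_of_mem_autGroup (one_mem _)⟩
  | insert v B hvB ih =>
    rw [Finset.coe_insert, Set.insert_subset_iff] at hB
    obtain ⟨τ, hτG, hτ⟩ := ih hB.2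
    have hτv : τ v ∈ Γ.right := (hτ.1.2 v).2 hB.1
    obtain ⟨s, hs⟩ := hΓ.exists_isSwitch {τ v} (by simpa using hτv)
    rw [Finset.coe_singleton] at hs
    refine ⟨s * τ, mul_mem (hG s _ hτv hs) hτG, ?_⟩
    convert hτ.mul hB.2 (Set.singleton_subset_iff.2 hτv) hs using 1
    ext x
    simp only [Finset.coe_insert, Set.mem_insert_iff, Finset.mem_coe, Set.mem_symmDiff,
      Set.mem_preimage, Set.mem_singleton_iff, EmbeddingLike.apply_eq_iff_eq]
    constructor
    · rintro (rfl | hx)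
      · exact Or.inr ⟨rfl, hvB⟩
      · exact Or.inl ⟨hx, by rintro rfl; exact hvB hx⟩
    · tauto

lemma IsSwitch.mem_switchGroup (hΓ : Γ.IsRandom) (hA : A ⊆ Γ.right) (hσ : Γ.IsSwitch σ A) :
    σ ∈ Γ.switchGroup {BSide.r} := by
  classical
  refine Subgroup.mem_sInf.2 fun G ⟨hGc, hgen⟩ => hGc σ fun F => ?_
  obtain ⟨τ, hτG, hτ⟩ := hΓ.exists_isSwitch_mem
    (fun g v hv hg => hgen (Or.inr ⟨.r, rfl, v, hv, hg⟩)) (F.filter (· ∈ A))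
    (fun x hx => hA (Finset.mem_filter.1 hx).2)
  obtain ⟨α, hα, hατ⟩ := hΓ.exists_mem_autGroup_apply_eq F hτ.1 hσ.1 fun a _ b hb =>
    hτ.adj_apply_iff (fun x hx => hA (Finset.mem_filter.1 hx).2) hA hσ (by simp [hb])
  exact ⟨α * τ, mul_mem (hgen (Or.inl hα)) hτG, hατ⟩

end Switches

section Parity

variable {V : Type*} {Γ : BipartiteGraph V} {σ : Equiv.Perm V}

lemma image_left_of_mem_symLR (hσ : σ ∈ Γ.symLR) : ⇑σ '' Γ.left = Γ.left := by
  ext x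
  rw [Equiv.image_eq_preimage_symm, Set.mem_preimage, ← hσ.1, Equiv.apply_symm_apply]

lemma image_right_of_mem_symLR (hσ : σ ∈ Γ.symLR) : ⇑σ '' Γ.right = Γ.right := by
  ext x
  rw [Equiv.image_eq_preimage_symm, Set.mem_preimage, ← hσ.2, Equiv.apply_symm_apply]

lemma IsMNSubgraph.image {S : Set V} {m n : ℕ} (hS : Γ.IsMNSubgraph S m n) (hσ : σ ∈ Γ.symLR) :
    Γ.IsMNSubgraph (σ '' S) m n := by
  refine ⟨hS.1.image σ, ?_, ?_⟩
  · rw [← image_left_of_mem_symLR hσ, ← Set.image_inter σ.injective,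
      Set.ncard_image_of_injective _ σ.injective, hS.2.1]
  · rw [← image_right_of_mem_symLR hσ, ← Set.image_inter σ.injective,
      Set.ncard_image_of_injective _ σ.injective, hS.2.2]

lemma isMNSubgraph_two_one_iff {S : Set V} :
    Γ.IsMNSubgraph S 2 1 ↔ ∃ a₁ a₂ b, a₁ ≠ a₂ ∧ a₁ ∈ Γ.left ∧ a₂ ∈ Γ.left ∧ b ∈ Γ.right ∧
      S = {a₁, a₂, b} := by
  constructor
  · rintro ⟨-, hleft, hright⟩
    obtain ⟨a₁, a₂, h₁₂, hleft⟩ := Set.ncard_eq_two.1 hleft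
    obtain ⟨b, hright⟩ := Set.ncard_eq_one.1 hright
    have hS : S = S ∩ Γ.left ∪ S ∩ Γ.right := by
      rw [← Set.inter_union_distrib_left, Γ.union_eq, Set.inter_univ]
    refine ⟨a₁, a₂, b, h₁₂, (hleft.symm ▸ Set.mem_insert a₁ {a₂} : a₁ ∈ S ∩ Γ.left).2,
      (hleft.symm ▸ Set.mem_insert_of_mem a₁ rfl : a₂ ∈ S ∩ Γ.left).2,
      (hright.symm ▸ rfl : b ∈ S ∩ Γ.right).2, ?_⟩
    rw [hS, hleft, hright, Set.insert_union, Set.singleton_union]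
  · rintro ⟨a₁, a₂, b, h₁₂, h₁, h₂, hb, rfl⟩
    have hbl := Γ.mem_right_iff_notMem_left.1 hb
    have h₁r : a₁ ∉ Γ.right := fun h => Γ.mem_right_iff_notMem_left.1 h h₁
    have h₂r : a₂ ∉ Γ.right := fun h => Γ.mem_right_iff_notMem_left.1 h h₂
    refine ⟨Set.toFinite _, ?_, ?_⟩
    · rw [Set.insert_inter_of_mem h₁, Set.insert_inter_of_mem h₂,
        Set.singleton_inter_of_notMem hbl, LawfulSingleton.insert_empty_eq, Set.ncard_pair h₁₂]
    · rw [Set.insert_inter_of_notMem h₁r, Set.insert_inter_of_notMem h₂r,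
        Set.singleton_inter_of_mem hb, Set.ncard_singleton]

lemma even_edgeCount_triple {a₁ a₂ b : V} (h₁₂ : a₁ ≠ a₂) (h₁ : a₁ ∈ Γ.left) (h₂ : a₂ ∈ Γ.left)
    (hb : b ∈ Γ.right) : Even (Γ.edgeCount {a₁, a₂, b}) ↔ (Γ.adj a₁ b ↔ Γ.adj a₂ b) := by
  classical
  have hedges : {p : V × V | p.1 ∈ ({a₁, a₂, b} : Set V) ∧ p.2 ∈ ({a₁, a₂, b} : Set V) ∧
      Γ.adj p.1 p.2} = ↑(({(a₁, b), (a₂, b)} : Finset (V × V)).filter fun p => Γ.adj p.1 p.2) := by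
    ext ⟨x, y⟩
    simp only [Set.mem_insert_iff, Set.mem_singleton_iff, Set.mem_ofPred_eq, Finset.coe_filter,
      Finset.mem_insert, Finset.mem_singleton, Prod.mk.injEq]
    refine ⟨fun ⟨hx, hy, hxy⟩ => ⟨?_, hxy⟩, fun ⟨hxy, h⟩ => ⟨by tauto, by tauto, h⟩⟩
    obtain ⟨hxl, hyr⟩ := Γ.adj_dom x y hxy
    rw [mem_right_iff_notMem_left] at hb hyr
    have : x ≠ b := by rintro rfl; exact hb hxl
    have : y ≠ a₁ := by rintro rfl; exact hyr h₁
    have : y ≠ a₂ := by rintro rfl; exact hyr h₂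
    tauto
  rw [edgeCount, hedges, Set.ncard_coe_finset, Finset.card_filter, Finset.sum_pair (by simp [h₁₂])]
  split_ifs <;> simp [*]

lemma preservesParityOn_triple_iff (hσ : σ ∈ Γ.symLR) {a₁ a₂ b : V} (h₁₂ : a₁ ≠ a₂)
    (h₁ : a₁ ∈ Γ.left) (h₂ : a₂ ∈ Γ.left) (hb : b ∈ Γ.right) :
    Γ.PreservesParityOn σ {a₁, a₂, b} ↔
      ((Γ.adj a₁ b ↔ Γ.adj a₂ b) ↔ (Γ.adj (σ a₁) (σ b) ↔ Γ.adj (σ a₂) (σ b))) := by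
  rw [PreservesParityOn, Set.image_insert_eq, Set.image_insert_eq, Set.image_singleton,
    even_edgeCount_triple h₁₂ h₁ h₂ hb, even_edgeCount_triple (σ.injective.ne h₁₂)
      ((hσ.1 a₁).2 h₁) ((hσ.1 a₂).2 h₂) ((hσ.2 b).2 hb)]

variable (Γ) in
def paritySubgroup : Subgroup (Equiv.Perm V) where
  carrier := {σ | σ ∈ Γ.symLR ∧ ∀ S : Set V, Γ.IsMNSubgraph S 2 1 → Γ.PreservesParityOn σ S}
  one_mem' := ⟨one_mem _, fun S _ => by simp [PreservesParityOn]⟩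
  mul_mem' := fun {σ τ} ⟨hσ, hσS⟩ ⟨hτ, hτS⟩ => ⟨mul_mem hσ hτ, fun S hS => by
    rw [PreservesParityOn, Equiv.Perm.coe_mul, Set.image_comp]
    exact (hτS S hS).trans (hσS _ (hS.image hτ))⟩
  inv_mem' := fun {σ} ⟨hσ, hσS⟩ => ⟨inv_mem hσ, fun S hS => by
    have h := hσS _ (hS.image (inv_mem hσ))
    rwa [PreservesParityOn, Equiv.Perm.coe_inv, Equiv.image_symm_image, Iff.comm] at h⟩

lemma isClosedSubgroup_paritySubgroup : IsClosedSubgroup Γ.paritySubgroup := by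
  intro g hg
  refine ⟨⟨fun v => ?_, fun v => ?_⟩, fun S hS => ?_⟩
  · obtain ⟨h, hh, hhg⟩ := hg {v}
    rw [← hhg v (Finset.mem_singleton_self v)]
    exact hh.1.1 v
  · obtain ⟨h, hh, hhg⟩ := hg {v}
    rw [← hhg v (Finset.mem_singleton_self v)]
    exact hh.1.2 v
  · obtain ⟨h, hh, hhg⟩ := hg hS.1.toFinset
    rw [PreservesParityOn, ← Set.EqOn.image_eq fun x hx => hhg x (by simpa using hx)]
    exact hh.2 S hS

lemma mem_paritySubgroup_iff : σ ∈ Γ.paritySubgroup ↔ ∃ A ⊆ Γ.right, Γ.IsSwitch σ A := by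
  constructor
  · rintro ⟨hσ, hσS⟩
    refine ⟨{b ∈ Γ.right | ∃ a ∈ Γ.left, ¬(Γ.adj a b ↔ Γ.adj (σ a) (σ b))}, fun b hb => hb.1,
      (isSwitch_iff_of_subset_right fun b hb => hb.1).2 ⟨hσ, fun a ha b hb => ?_⟩⟩
    simp only [Set.mem_ofPred_eq, hb, true_and, not_exists, not_and, not_not]
    refine ⟨fun hab a' ha' => ?_, fun h => h a ha⟩
    obtain rfl | haa' := eq_or_ne a a'
    · exact hab
    have := (preservesParityOn_triple_iff hσ haa' ha ha' hb).1
      (hσS _ (isMNSubgraph_two_one_iff.2 ⟨a, a', b, haa', ha, ha', hb, rfl⟩))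
    tauto
  · rintro ⟨A, hA, hσA⟩
    rw [isSwitch_iff_of_subset_right hA] at hσA
    refine ⟨hσA.1, fun S hS => ?_⟩
    obtain ⟨a₁, a₂, b, h₁₂, h₁, h₂, hb, rfl⟩ := isMNSubgraph_two_one_iff.1 hS
    rw [preservesParityOn_triple_iff hσA.1 h₁₂ h₁ h₂ hb]
    have := hσA.2 a₁ h₁ b hb
    have := hσA.2 a₂ h₂ b hb
    tauto

lemma switchGroup_le_paritySubgroup : Γ.switchGroup {BSide.r} ≤ Γ.paritySubgroup :=
  sInf_le ⟨isClosedSubgroup_paritySubgroup, by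
    rintro g (hg | ⟨_, rfl, v, hv, hgv⟩)
    · exact mem_paritySubgroup_iff.2 ⟨∅, Set.empty_subset _, isSwitch_empty_of_mem_autGroup hg⟩
    · exact mem_paritySubgroup_iff.2 ⟨{v}, Set.singleton_subset_iff.2 hv, hgv⟩⟩

end Parity

end BipartiteGraph

/-- **Lemma 2.4.** `S_{r}(Γ)` is exactly the set of side-preserving
permutations which preserve the parity of cross-types in every
`(2 × 1)`-subgraph of `Γ`. -/
theorem switchGroup_r_eq_parity_preservers {V : Type*} (Γ : BipartiteGraph V)
    (hΓ : Γ.IsRandom) :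
    (Γ.switchGroup {BSide.r} : Set (Equiv.Perm V)) =
      {σ : Equiv.Perm V | σ ∈ Γ.symLR ∧
        ∀ S : Set V, Γ.IsMNSubgraph S 2 1 → Γ.PreservesParityOn (⇑σ) S} := by
  refine congrArg SetLike.coe (le_antisymm Γ.switchGroup_le_paritySubgroup fun σ hσ => ?_)
  obtain ⟨A, hA, hσA⟩ := Γ.mem_paritySubgroup_iff.1 hσ
  exact hσA.mem_switchGroup hΓ hA
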